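/- Let E be a d-uniform hypergraph on [n], let c ∈ [1, 3/2) be a constant and v a positive integer with v < d ≤ 3v/(2c). Then any E-separable binary code (equivalently, E-separable family of subsets of [t]) has length t ≥ (v / (c(d − v/c)·log₂(e·v/(c(d − v/c))))) · log₂(|E| / n^{v/c}). -/

import Mathlib

/-! Separability makes `e ↦ ⋃_{j ∈ e} G j` injective on `E`, so `|E| ≤ 2^t`, and `d`-uniformity
gives `|E| ≤ n^d`. With `K` the coefficient of the bound, `K · (log |E| - (v/c) log n)` is at most
`log |E|` when `K ≤ 1`, and otherwise at most `log |E| + (K - 1) (log |E| - d log n) ≤ log |E|`,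
because the hypotheses on `c` and `d` force `K (d - v/c) ≤ d`. -/

open Real Finset

theorem Finset.card_le_two_pow_of_injOn {γ β : Type*} [Fintype β] [DecidableEq β]
    {E : Finset γ} {f : γ → Finset β} (hf : Set.InjOn f E) : #E ≤ 2 ^ Fintype.card β := by
  rw [← card_image_of_injOn hf, ← Fintype.card_finset]
  exact card_le_univ _

theorem Finset.card_le_pow_of_forall_card_eq {α : Type*} [Fintype α] {E : Finset (Finset α)}
    {d : ℕ} (hE : ∀ e ∈ E, #e = d) : #E ≤ Fintype.card α ^ d :=
  calc #E ≤ #(powersetCard d (univ : Finset α)) :=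
        card_le_card fun e he ↦ mem_powersetCard.2 ⟨subset_univ e, hE e he⟩
    _ = (Fintype.card α).choose d := by rw [card_powersetCard, card_univ]
    _ ≤ Fintype.card α ^ d := Nat.choose_le_pow _ _

theorem Real.logb_natCast_nonneg {B : ℝ} (hB : 1 < B) (m : ℕ) : 0 ≤ logb B m :=
  div_nonneg (log_natCast_nonneg m) (log_nonneg hB.le)

theorem Real.logb_natCast_le_mul_logb_of_le_pow {B : ℝ} (hB : 1 < B) {m b k : ℕ}
    (h : m ≤ b ^ k) : logb B m ≤ k * logb B b := by
  rcases m.eq_zero_or_pos with rfl | hm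
  · simpa using mul_nonneg k.cast_nonneg (logb_natCast_nonneg hB b)
  · rw [← logb_pow]
    exact logb_le_logb_of_le hB (by positivity) (by exact_mod_cast h)

theorem mul_sub_mul_le_of_le_of_le {K a d L N t : ℝ} (hK : 0 ≤ K) (ha : 0 ≤ a) (hN : 0 ≤ N)
    (hL : 0 ≤ L) (hLt : L ≤ t) (hLd : L ≤ d * N) (hKd : K * (d - a) ≤ d) :
    K * (L - a * N) ≤ t := by
  rcases le_or_gt K 1 with hK1 | hK1
  · nlinarith [mul_nonneg hK (mul_nonneg ha hN)]
  · nlinarith [mul_le_mul_of_nonneg_left hLd (sub_nonneg.2 hK1.le)]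

theorem one_le_logb_exp_one_mul_div {u v : ℝ} (hu : 0 < u) (huv : 2 * u ≤ v) :
    1 ≤ logb 2 (exp 1 * v / u) := by
  have hv : 2 ≤ v / u := by rwa [le_div_iff₀ hu]
  have h2 : 2 ≤ exp 1 * v / u := by
    rw [mul_div_assoc]
    nlinarith [add_one_le_exp (1 : ℝ)]
  rw [le_logb_iff_rpow_le one_lt_two (by linarith)]
  simpa using h2

noncomputable def separableCoeff (c d v : ℝ) : ℝ :=
  v / (c * (d - v / c) * logb 2 (exp 1 * v / (c * (d - v / c))))

theorem separableCoeff_bounds {c d v : ℝ} (hc : 1 ≤ c) (hv : 0 ≤ v) (hvd : v < d)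
    (hd : d ≤ 3 * v / (2 * c)) :
    0 ≤ separableCoeff c d v ∧ separableCoeff c d v * (d - v / c) ≤ d := by
  have hc0 : 0 < c := by linarith
  unfold separableCoeff
  set u := c * (d - v / c) with hu
  have hu_eq : u = c * d - v := by rw [hu]; field_simp
  have hu_pos : 0 < u := by
    rw [hu_eq]; nlinarith [mul_le_mul_of_nonneg_right hc (hv.trans hvd.le)]
  have hdc : d * (2 * c) ≤ 3 * v := (le_div_iff₀ (by positivity)).1 hd
  have huv : 2 * u ≤ v := by rw [hu_eq]; nlinarith
  have hW := one_le_logb_exp_one_mul_div hu_pos huv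
  have hK : v / (u * logb 2 (exp 1 * v / u)) * (d - v / c) =
      v / (c * logb 2 (exp 1 * v / u)) := by
    rw [show d - v / c = u / c by rw [hu]; field_simp]
    field_simp
  refine ⟨div_nonneg hv (by positivity), ?_⟩
  rw [hK, div_le_iff₀ (by positivity)]
  nlinarith [mul_le_mul hc hW zero_le_one hc0.le]

theorem stmt8_general {n t d v : ℕ} (E : Finset (Finset (Fin n))) (G : Fin n → Finset (Fin t))
    (hunif : ∀ e ∈ E, e.card = d)
    (hsep : ∀ e ∈ E, ∀ e' ∈ E, e ≠ e' → e.biUnion G ≠ e'.biUnion G)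
    (c : ℝ) (hc1 : 1 ≤ c)
    (hvd : v < d) (hd : (d : ℝ) ≤ 3 * v / (2 * c)) :
    (t : ℝ) ≥
      ((v : ℝ) /
          (c * ((d : ℝ) - v / c) * Real.logb 2 (Real.exp 1 * v / (c * ((d : ℝ) - v / c))))) *
        Real.logb 2 ((E.card : ℝ) / (n : ℝ) ^ ((v : ℝ) / c)) := by
  obtain ⟨hK, hKd⟩ := separableCoeff_bounds hc1 v.cast_nonneg (by exact_mod_cast hvd) hd
  rcases E.eq_empty_or_nonempty with rfl | ⟨e₀, he₀⟩
  · simp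
  have hdn : d ≤ n := by simpa [hunif e₀ he₀] using card_le_univ e₀
  have hn : (0 : ℝ) < n := by exact_mod_cast (show 0 < n by omega)
  have hE : (0 : ℝ) < #E := by exact_mod_cast card_pos.2 ⟨e₀, he₀⟩
  have hinj : Set.InjOn (fun e ↦ e.biUnion G) (E : Set (Finset (Fin n))) :=
    fun e he e' he' h ↦ by_contra fun hne ↦ hsep e he e' he' hne h
  rw [ge_iff_le, logb_div hE.ne' (rpow_pos_of_pos hn _).ne', logb_rpow_eq_mul_logb_of_pos hn]
  show separableCoeff c d v * _ ≤ (t : ℝ)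
  refine mul_sub_mul_le_of_le_of_le hK (by positivity) (logb_natCast_nonneg one_lt_two n)
    (logb_natCast_nonneg one_lt_two _) ?_ ?_ hKd
  · simpa using logb_natCast_le_mul_logb_of_le_pow one_lt_two (card_le_two_pow_of_injOn hinj)
  · simpa using logb_natCast_le_mul_logb_of_le_pow one_lt_two (card_le_pow_of_forall_card_eq hunif)

theorem stmt8 {n t d v : ℕ} (E : Finset (Finset (Fin n))) (G : Fin n → Finset (Fin t))
    (hunif : ∀ e ∈ E, e.card = d)
    (hsep : ∀ e ∈ E, ∀ e' ∈ E, e ≠ e' → e.biUnion G ≠ e'.biUnion G)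
    (c : ℝ) (hc1 : 1 ≤ c) (hc2 : c < 3 / 2)
    (hv : 0 < v) (hvd : v < d) (hd : (d : ℝ) ≤ 3 * v / (2 * c)) :
    (t : ℝ) ≥
      ((v : ℝ) /
          (c * ((d : ℝ) - v / c) * Real.logb 2 (Real.exp 1 * v / (c * ((d : ℝ) - v / c))))) *
        Real.logb 2 ((E.card : ℝ) / (n : ℝ) ^ ((v : ℝ) / c)) :=
  stmt8_general E G hunif hsep c hc1 hvd hd
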